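/- Let p be a prime and x ∈ (0,1) irrational with x ∈ Mad_δ for some δ > 0, with continued fraction word w_CF(x) and convergent denominators q_n. Suppose (n_k) is a strictly increasing sequence of natural numbers, w an infinite word over ℕ, and y = (y₁,y₂) ∈ ℚ_p² with max(|y₁|_p,|y₂|_p) = 1, such that: (i) the shifted words T^{n_k} w_CF(x) converge to w pointwise, and (ii) the vectors obtained from (q_{n_k−1}, q_{n_k}) ∈ ℤ² ⊆ ℚ_p² by multiplying with the power of p that makes their maximum p-adic absolute value equal to 1 converge to y in ℚ_p². Then there exists ε > 0 such that (w, y) ∈ LMad_ε. -/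

import Mathlib

open Matrix Filter

/-- The matrix `A_a = [[0,1],[1,a]]` associated to a letter `a`. -/
def Amat (a : ℕ) : Matrix (Fin 2) (Fin 2) ℤ := !![0, 1; 1, (a : ℤ)]

/-- The matrix `A_u` associated to a finite word `u` (product of the `A_a`). -/
def Aword (u : List ℕ) : Matrix (Fin 2) (Fin 2) ℤ := (u.map Amat).prod

/-- The prefix of length `n` of an infinite word `w`. -/
def wordPrefix (w : ℕ → ℕ) (n : ℕ) : List ℕ := (List.range n).map w

/-- The left shift `T^m w` of an infinite word. -/
def shiftW (w : ℕ → ℕ) (m : ℕ) : ℕ → ℕ := fun i => w (m + i)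

/-- Distance from a real number to the nearest integer. -/
noncomputable def distNearestInt (t : ℝ) : ℝ := |t - round t|

/-- `q ∈ PBad_ε` : `q` is a `p`-adically badly approximable vector with constant `ε`. -/
def PBadE (p : ℕ) [Fact p.Prime] (ε : ℝ) (q : Fin 2 → ℚ_[p]) : Prop :=
  ∀ a b : ℤ, ¬(a = 0 ∧ b = 0) →
    ε / max ((a : ℝ) ^ 2) ((b : ℝ) ^ 2) ≤
      ‖(a : ℚ_[p]) * q 0 + (b : ℚ_[p]) * q 1‖ / max ‖q 0‖ ‖q 1‖

/-- An integer matrix viewed as a matrix over `ℚ_[p]`. -/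
noncomputable def matQ (p : ℕ) [Fact p.Prime] (M : Matrix (Fin 2) (Fin 2) ℤ) :
    Matrix (Fin 2) (Fin 2) ℚ_[p] := M.map Int.cast

/-- `(w, y) ∈ LMad_ε`. -/
def LMadE (p : ℕ) [Fact p.Prime] (ε : ℝ) (w : ℕ → ℕ) (y : Fin 2 → ℚ_[p]) : Prop :=
  (∀ n, 1 ≤ w n ∧ (w n : ℤ) ≤ ⌊ε⁻¹⌋ + 1) ∧
  ∀ n : ℕ, PBadE p ε (Matrix.mulVec (matQ p (Aword (wordPrefix w n))ᵀ) y)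

/-- `(w, y) ∈ LMad`. -/
def LMad (p : ℕ) [Fact p.Prime] (w : ℕ → ℕ) (y : Fin 2 → ℚ_[p]) : Prop :=
  ∃ ε > 0, LMadE p ε w y

/-- The projective distance `d` on nonzero vectors of `ℚ_[p]²`. -/
noncomputable def pdist (p : ℕ) [Fact p.Prime] (u v : Fin 2 → ℚ_[p]) : ℝ :=
  ‖u 0 * v 1 - u 1 * v 0‖ / (max ‖u 0‖ ‖u 1‖ * max ‖v 0‖ ‖v 1‖)

/-- `q ∈ B_k(w, y)` : `q` is `p^{-k}`-close to some `(A_{w_n})ᵀ y`. -/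
def inBk (p : ℕ) [Fact p.Prime] (k : ℕ) (w : ℕ → ℕ) (y : Fin 2 → ℚ_[p])
    (q : Fin 2 → ℚ_[p]) : Prop :=
  q ≠ 0 ∧ ∃ n : ℕ,
    pdist p q (Matrix.mulVec (matQ p (Aword (wordPrefix w n))ᵀ) y) ≤ (p : ℝ) ^ (-(k : ℤ))

/-- `U_k(w)` : set of reductions mod `p^k` of the matrices of all prefixes of `w`. -/
def Uk (p k : ℕ) (w : ℕ → ℕ) : Set (Matrix (Fin 2) (Fin 2) (ZMod (p ^ k))) :=
  { M | ∃ n : ℕ, M = (Aword (wordPrefix w n)).map Int.cast }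

/-- The finite word `u` occurs in `w` at position `m`. -/
def occursAt (w : ℕ → ℕ) (u : List ℕ) (m : ℕ) : Prop :=
  u = (List.range u.length).map fun i => w (m + i)

/-- `u` is a factor of the infinite word `w`. -/
def IsFactor (u : List ℕ) (w : ℕ → ℕ) : Prop := ∃ m, occursAt w u m

/-- `w` is recurrent: every factor occurs infinitely often. -/
def Recurrent (w : ℕ → ℕ) : Prop :=
  ∀ u : List ℕ, IsFactor u w → ∀ M : ℕ, ∃ m, M ≤ m ∧ occursAt w u m

/-- `w` is uniformly recurrent: recurrent with bounded gaps between occurrences. -/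
def UniformlyRecurrent (w : ℕ → ℕ) : Prop :=
  Recurrent w ∧
    ∀ u : List ℕ, IsFactor u w →
      ∃ d : ℕ, ∀ m : ℕ, ∃ m', m ≤ m' ∧ m' ≤ m + d ∧ occursAt w u m'

/-- The complexity `P(w, n)` : number of distinct factors of `w` of length `n`. -/
noncomputable def complexity (w : ℕ → ℕ) (n : ℕ) : ℕ :=
  Set.ncard { u : List ℕ | u.length = n ∧ IsFactor u w }

/-- `a` is the sequence of partial quotients of the continued fraction expansion of `x`,
obtained by iterating the Gauss map. -/
def IsCFSeq (x : ℝ) (a : ℕ → ℕ) : Prop :=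
  ∃ ξ : ℕ → ℝ, ξ 0 = x ∧
    ∀ n, (0 < ξ n ∧ ξ n < 1) ∧ ((a n : ℤ) = ⌊(ξ n)⁻¹⌋) ∧ ξ (n + 1) = (ξ n)⁻¹ - (a n : ℝ)

/-- `Q` is the (index-shifted) sequence of denominators of the convergents of the continued
fraction with partial quotients `a` : `Q (n+1)` is the paper's `q_n`. -/
def IsCFDen (a : ℕ → ℕ) (Q : ℕ → ℤ) : Prop :=
  Q 0 = 0 ∧ Q 1 = 1 ∧ ∀ n, Q (n + 2) = (a n : ℤ) * Q (n + 1) + Q n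

open Topology

/-!
The errors `E_n = q_n x - p_n` of the convergents satisfy `q_{n+1} |E_n| ≤ 1`, because the
Casoratian `q_{n+1} E_n - q_n E_{n+1} = ±1` is a sum of two terms of the same sign. Hence an
integer combination `S = A q_m + B q_{m+1}` has `|S| ‖S x‖ ≤ (|A| + |B|)²`, and `x ∈ Mad_δ`
forces `|S|_p ≥ δ / (4 max(A², B²))` whenever `S ≠ 0`; taking `S = q_{n+1}` instead bounds every
partial quotient by `1/δ`. Once `T^{n_k} w_CF(x)` agrees with `w` on its first `n` letters,
`(A_{w_n})ᵀ` sends `(q_{n_k-1}, q_{n_k})` to `(q_{n_k+n-1}, q_{n_k+n})`, for which `S ≠ 0` as soon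
as `q_{n_k+n} > |A|` by coprimality of consecutive denominators. The resulting inequality is
homogeneous, so it survives the normalisation by powers of `p` and passes to the limit
`(A_{w_n})ᵀ y`, which is nonzero since `det A_a = -1`.
-/

theorem casoratian_eq {R : Type*} [CommRing R] (b : ℕ → R) {u v : ℕ → R}
    (hu : ∀ n, u (n + 2) = b n * u (n + 1) + u n) (hv : ∀ n, v (n + 2) = b n * v (n + 1) + v n)
    (n : ℕ) : u (n + 1) * v n - u n * v (n + 1) = (-1) ^ n * (u 1 * v 0 - u 0 * v 1) := by
  induction n with
  | zero => ring
  | succ n ih => rw [hu, hv, pow_succ]; linear_combination (-1 : R) * ih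

-- `cfNum a (n + 1)` is the numerator `p_n` of the `n`-th convergent, shifted like `Q` in `IsCFDen`.
def cfNum (a : ℕ → ℕ) : ℕ → ℤ
  | 0 => 1
  | 1 => 0
  | n + 2 => a n * cfNum a (n + 1) + cfNum a n

variable {x : ℝ} {a : ℕ → ℕ} {Q : ℕ → ℤ}

theorem IsCFSeq.one_le (ha : IsCFSeq x a) (n : ℕ) : 1 ≤ a n := by
  obtain ⟨ξ, -, hξ⟩ := ha
  obtain ⟨⟨hpos, hlt⟩, hfl, -⟩ := hξ n
  have : (1 : ℤ) ≤ a n := hfl ▸ Int.le_floor.mpr (by simpa using (one_le_inv₀ hpos).mpr hlt.le)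
  exact_mod_cast this

namespace IsCFDen

theorem casoratian_cfNum (hQ : IsCFDen a Q) (n : ℕ) :
    Q (n + 1) * cfNum a n - Q n * cfNum a (n + 1) = (-1) ^ n := by
  simpa [hQ.1, hQ.2.1, cfNum] using
    casoratian_eq (fun n ↦ (a n : ℤ)) (v := cfNum a) hQ.2.2 (fun _ ↦ rfl) n

theorem isCoprime (hQ : IsCFDen a Q) (n : ℕ) : IsCoprime (Q n) (Q (n + 1)) :=
  ⟨-(-1) ^ n * cfNum a (n + 1), (-1) ^ n * cfNum a n, by
    have hsq : ((-1 : ℤ) ^ n) ^ 2 = 1 := by rw [← pow_mul, mul_comm, pow_mul]; norm_num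
    linear_combination (-1) ^ n * hQ.casoratian_cfNum n + hsq⟩

section

variable (hQ : IsCFDen a Q) (ha : ∀ n, 1 ≤ a n)
include hQ ha

theorem monotone : Monotone Q := by
  suffices h : ∀ n, 0 ≤ Q n ∧ Q n ≤ Q (n + 1) from monotone_nat_of_le_succ fun n ↦ (h n).2
  intro n
  induction n with
  | zero => simp [hQ.1, hQ.2.1]
  | succ n ih =>
    have : (1 : ℤ) ≤ a n := by exact_mod_cast ha n
    refine ⟨ih.1.trans ih.2, ?_⟩
    rw [hQ.2.2]
    nlinarith [ih.1, ih.2]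

theorem nonneg (n : ℕ) : 0 ≤ Q n := hQ.1 ▸ hQ.monotone ha (Nat.zero_le n)

theorem one_le_succ (n : ℕ) : 1 ≤ Q (n + 1) := hQ.2.1 ▸ hQ.monotone ha (Nat.le_add_left 1 n)

theorem mul_le (n : ℕ) : a n * Q (n + 1) ≤ Q (n + 2) := by
  rw [hQ.2.2]; linarith [hQ.nonneg ha n]

theorem natCast_le_succ (n : ℕ) : (n : ℤ) ≤ Q (n + 1) := by
  induction n with
  | zero => simp [hQ.2.1]
  | succ n ih =>
    rcases n with _ | n
    · simpa using hQ.one_le_succ ha 1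
    · have h := hQ.2.2 (n + 1)
      have : (1 : ℤ) ≤ a (n + 1) := by exact_mod_cast ha _
      push_cast at ih ⊢
      nlinarith [hQ.one_le_succ ha n, hQ.nonneg ha (n + 2)]

theorem tendsto_atTop : Tendsto Q atTop atTop :=
  (tendsto_add_atTop_iff_nat 1).1 <|
    tendsto_atTop_mono (hQ.natCast_le_succ ha) tendsto_natCast_atTop_atTop

theorem comb_ne_zero {m : ℕ} {A B : ℤ}
    (hAB : ¬(A = 0 ∧ B = 0)) (hA : |A| < Q (m + 1)) : A * Q m + B * Q (m + 1) ≠ 0 := by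
  intro h
  have hA0 : A = 0 :=
    Int.eq_zero_of_abs_lt_dvd ((hQ.isCoprime m).symm.dvd_of_dvd_mul_right ⟨-B, by linarith⟩) hA
  have hQ0 : Q (m + 1) ≠ 0 := by linarith [hQ.one_le_succ ha m]
  exact hAB ⟨hA0, by simpa [hA0, hQ0] using h⟩

end

theorem err_succ (hQ : IsCFDen a Q) {ξ : ℕ → ℝ} (hξ0 : ξ 0 = x) (hξ : ∀ n, ξ n ≠ 0)
    (hrec : ∀ n, ξ (n + 1) = (ξ n)⁻¹ - a n) (n : ℕ) :
    Q (n + 1) * x - cfNum a (n + 1) = -ξ n * (Q n * x - cfNum a n) := by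
  induction n with
  | zero => simp [hQ.1, hQ.2.1, cfNum, hξ0]
  | succ n ih =>
    have ha : (a n : ℝ) = (ξ n)⁻¹ - ξ (n + 1) := by rw [hrec]; ring
    rw [hQ.2.2, cfNum]
    push_cast
    rw [ha]
    linear_combination (ξ n)⁻¹ * ih - (Q n * x - cfNum a n) * inv_mul_cancel₀ (hξ n)

end IsCFDen

theorem IsCFSeq.mul_abs_sub_le (ha : IsCFSeq x a) (hQ : IsCFDen a Q) (n : ℕ) :
    Q (n + 1) * |Q n * x - cfNum a n| ≤ 1 := by
  have ha1 := ha.one_le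
  obtain ⟨ξ, hξ0, hξ⟩ := ha
  have hpos : 0 < ξ n := (hξ n).1.1
  have hcas : ((Q (n + 1) * cfNum a n - Q n * cfNum a (n + 1) : ℤ) : ℝ) = (-1) ^ n := by
    exact_mod_cast hQ.casoratian_cfNum n
  push_cast at hcas
  have hsucc := hQ.err_succ hξ0 (fun n ↦ (hξ n).1.1.ne') (fun n ↦ (hξ n).2.2) n
  have hQn : (0 : ℝ) ≤ Q n := by exact_mod_cast hQ.nonneg ha1 n
  have hQn1 : (0 : ℝ) ≤ Q (n + 1) := by exact_mod_cast hQ.nonneg ha1 (n + 1)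
  have hid : (Q (n + 1) + Q n * ξ n) * (Q n * x - cfNum a n) = -(-1) ^ n := by
    linear_combination -hcas + Q n * hsucc
  have key := congrArg abs hid
  rw [abs_mul, abs_neg, abs_neg_one_pow, abs_of_nonneg (by positivity)] at key
  nlinarith [mul_nonneg (mul_nonneg hQn hpos.le) (abs_nonneg ((Q n : ℝ) * x - cfNum a n))]

theorem distNearestInt_abs_mul_le (s x : ℝ) (z : ℤ) : distNearestInt (|s| * x) ≤ |s * x - z| := by
  rcases abs_choice s with h | h <;> rw [h]
  · exact round_le _ z
  · have h' := round_le (-s * x) (-z)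
    rw [show -s * x - ((-z : ℤ) : ℝ) = -(s * x - z) by push_cast; ring, abs_neg] at h'
    exact h'

theorem add_abs_sq_le_four_mul_max (A B : ℝ) : (|A| + |B|) ^ 2 ≤ 4 * max (A ^ 2) (B ^ 2) := by
  rcases le_total |A| |B| with h | h
  · have : A ^ 2 ≤ B ^ 2 := sq_le_sq.2 h
    rw [max_eq_right this]
    nlinarith [abs_nonneg A, sq_abs B]
  · have : B ^ 2 ≤ A ^ 2 := sq_le_sq.2 h
    rw [max_eq_left this]
    nlinarith [abs_nonneg B, sq_abs A]

def MadE (p : ℕ) [Fact p.Prime] (δ x : ℝ) : Prop :=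
  ∀ q : ℕ, 1 ≤ q → δ ≤ (q : ℝ) * ‖((q : ℕ) : ℚ_[p])‖ * distNearestInt ((q : ℝ) * x)

variable {p : ℕ} [Fact p.Prime] {δ : ℝ}

theorem MadE.le_of_ne_zero (hMad : MadE p δ x) {S : ℤ} (hS : S ≠ 0) (z : ℤ) :
    δ ≤ |(S : ℝ)| * ‖(S : ℚ_[p])‖ * |S * x - z| := by
  have h := hMad S.natAbs (Int.natAbs_pos.2 hS)
  rw [Nat.cast_natAbs, Int.cast_abs, norm_natAbs] at h
  exact h.trans (mul_le_mul_of_nonneg_left (distNearestInt_abs_mul_le _ x z) (by positivity))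

theorem MadE.mul_le_one (hMad : MadE p δ x) (ha : IsCFSeq x a) (hQ : IsCFDen a Q) (n : ℕ) :
    δ * a n ≤ 1 := by
  have hQ1 : (1 : ℝ) ≤ Q (n + 1) := by exact_mod_cast hQ.one_le_succ ha.one_le n
  have hmul : (a n : ℝ) * Q (n + 1) ≤ Q (n + 2) := by exact_mod_cast hQ.mul_le ha.one_le n
  set E := |(Q (n + 1) : ℝ) * x - cfNum a (n + 1)|
  have hδ : δ ≤ Q (n + 1) * E := by
    have h := hMad.le_of_ne_zero (S := Q (n + 1)) (by linarith [hQ.one_le_succ ha.one_le n])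
      (cfNum a (n + 1))
    rw [abs_of_pos (by linarith)] at h
    exact h.trans (mul_le_mul_of_nonneg_right
      (mul_le_of_le_one_right (by linarith) (Padic.norm_int_le_one _)) (abs_nonneg _))
  calc δ * a n ≤ Q (n + 1) * E * a n := by gcongr
    _ ≤ Q (n + 2) * E := by nlinarith [abs_nonneg ((Q (n + 1) : ℝ) * x - cfNum a (n + 1))]
    _ ≤ 1 := ha.mul_abs_sub_le hQ (n + 1)

theorem MadE.le_sq_mul_norm (hMad : MadE p δ x) (ha : IsCFSeq x a) (hQ : IsCFDen a Q) (m : ℕ)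
    {A B : ℤ} (hS : A * Q m + B * Q (m + 1) ≠ 0) :
    δ ≤ (|(A : ℝ)| + |(B : ℝ)|) ^ 2 * ‖((A * Q m + B * Q (m + 1) : ℤ) : ℚ_[p])‖ := by
  set E₀ := (Q m : ℝ) * x - cfNum a m
  set E₁ := (Q (m + 1) : ℝ) * x - cfNum a (m + 1)
  have h := hMad.le_of_ne_zero hS (A * cfNum a m + B * cfNum a (m + 1))
  have hmono₀ : (Q m : ℝ) ≤ Q (m + 1) := by exact_mod_cast hQ.monotone ha.one_le m.le_succ
  have hmono₁ : (Q (m + 1) : ℝ) ≤ Q (m + 2) := by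
    exact_mod_cast hQ.monotone ha.one_le (m + 1).le_succ
  have hQm : (0 : ℝ) ≤ Q m := by exact_mod_cast hQ.nonneg ha.one_le m
  have hE₀ := ha.mul_abs_sub_le hQ m
  have hE₁ := ha.mul_abs_sub_le hQ (m + 1)
  have hSabs : |((A * Q m + B * Q (m + 1) : ℤ) : ℝ)| ≤ (|(A : ℝ)| + |(B : ℝ)|) * Q (m + 1) := by
    push_cast
    refine (abs_add_le _ _).trans ?_
    rw [abs_mul, abs_mul, abs_of_nonneg hQm, abs_of_nonneg (hQm.trans hmono₀)]
    nlinarith [abs_nonneg (A : ℝ), abs_nonneg (B : ℝ)]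
  have hdist : Q (m + 1) * |((A * Q m + B * Q (m + 1) : ℤ) : ℝ) * x
      - ((A * cfNum a m + B * cfNum a (m + 1) : ℤ) : ℝ)| ≤ |(A : ℝ)| + |(B : ℝ)| := by
    have : ((A * Q m + B * Q (m + 1) : ℤ) : ℝ) * x
        - ((A * cfNum a m + B * cfNum a (m + 1) : ℤ) : ℝ) = A * E₀ + B * E₁ := by
      push_cast; ring
    rw [this]
    have := abs_add_le ((A : ℝ) * E₀) (B * E₁)
    rw [abs_mul, abs_mul] at this
    nlinarith [abs_nonneg (A : ℝ), abs_nonneg (B : ℝ), abs_nonneg E₁,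
      mul_le_mul_of_nonneg_right hmono₁ (abs_nonneg E₁)]
  set S : ℤ := A * Q m + B * Q (m + 1)
  set D := |(S : ℝ) * x - ((A * cfNum a m + B * cfNum a (m + 1) : ℤ) : ℝ)|
  have hprod : |(S : ℝ)| * D ≤ (|(A : ℝ)| + |(B : ℝ)|) ^ 2 := calc
    _ ≤ (|(A : ℝ)| + |(B : ℝ)|) * Q (m + 1) * D := by gcongr
    _ = (|(A : ℝ)| + |(B : ℝ)|) * (Q (m + 1) * D) := mul_assoc ..
    _ ≤ (|(A : ℝ)| + |(B : ℝ)|) * (|(A : ℝ)| + |(B : ℝ)|) := by gcongr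
    _ = _ := (sq _).symm
  calc δ ≤ |(S : ℝ)| * ‖(S : ℚ_[p])‖ * D := h
    _ = |(S : ℝ)| * D * ‖(S : ℚ_[p])‖ := by ring
    _ ≤ _ := by gcongr

theorem MadE.div_max_sq_le_norm (hMad : MadE p δ x) (ha : IsCFSeq x a) (hQ : IsCFDen a Q)
    (m : ℕ) {A B : ℤ} (hS : A * Q m + B * Q (m + 1) ≠ 0) :
    δ / 4 / max ((A : ℝ) ^ 2) ((B : ℝ) ^ 2) ≤ ‖((A * Q m + B * Q (m + 1) : ℤ) : ℚ_[p])‖ := by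
  have hAB : (A : ℝ) ≠ 0 ∨ (B : ℝ) ≠ 0 := by
    by_contra! h
    exact hS (by simp [show A = 0 by exact_mod_cast h.1, show B = 0 by exact_mod_cast h.2])
  have hmax : 0 < max ((A : ℝ) ^ 2) ((B : ℝ) ^ 2) := by
    rcases hAB with h | h
    · exact lt_max_of_lt_left (by positivity)
    · exact lt_max_of_lt_right (by positivity)
  rw [div_div, div_le_iff₀ (by positivity)]
  nlinarith [hMad.le_sq_mul_norm ha hQ m hS, add_abs_sq_le_four_mul_max (A : ℝ) B,
    norm_nonneg ((A * Q m + B * Q (m + 1) : ℤ) : ℚ_[p])]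

theorem Amat_transpose (b : ℕ) : (Amat b)ᵀ = Amat b := by
  ext i j; fin_cases i <;> fin_cases j <;> rfl

theorem Amat_mulVec (b : ℕ) (v : Fin 2 → ℤ) : Amat b *ᵥ v = ![v 1, v 0 + b * v 1] := by
  ext i; fin_cases i <;> simp [Amat, mulVec, dotProduct]

theorem Aword_append (u v : List ℕ) : Aword (u ++ v) = Aword u * Aword v := by
  simp [Aword]

theorem det_Aword (u : List ℕ) : (Aword u).det = (-1) ^ u.length := by
  induction u with
  | nil => simp [Aword]
  | cons b u ih =>
    rw [show b :: u = [b] ++ u from rfl, Aword_append, det_mul, ih]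
    simp [Aword, Amat, det_fin_two_of, pow_succ']

theorem wordPrefix_succ (w : ℕ → ℕ) (n : ℕ) : wordPrefix w (n + 1) = wordPrefix w n ++ [w n] := by
  simp [wordPrefix, List.range_succ]

theorem Aword_wordPrefix_transpose_mulVec {u : ℕ → ℤ}
    (hu : ∀ n, u (n + 2) = a n * u (n + 1) + u n) (m n : ℕ) :
    (Aword (wordPrefix (shiftW a m) n))ᵀ *ᵥ (fun i : Fin 2 ↦ u (m + i)) =
      fun i : Fin 2 ↦ u (m + n + i) := by
  induction n with
  | zero => simp [wordPrefix, Aword]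
  | succ n ih =>
    rw [wordPrefix_succ, Aword_append, transpose_mul, ← mulVec_mulVec, ih]
    simp only [Aword, List.map_cons, List.map_nil, List.prod_cons, List.prod_nil, mul_one,
      Amat_transpose, Amat_mulVec]
    ext i; fin_cases i
    · simp [add_assoc]
    · simp [shiftW, show m + (n + 1) + 1 = m + n + 2 by omega, hu, add_comm]

theorem matQ_Aword_wordPrefix_transpose_mulVec {u : ℕ → ℤ}
    (hu : ∀ n, u (n + 2) = a n * u (n + 1) + u n) (t : ℚ_[p]) (m n : ℕ) :
    matQ p (Aword (wordPrefix (shiftW a m) n))ᵀ *ᵥ (fun i : Fin 2 ↦ t * (u (m + i) : ℚ_[p])) =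
      fun i : Fin 2 ↦ t * (u (m + n + i) : ℚ_[p]) := by
  ext i
  have h := (Int.castRingHom ℚ_[p]).map_mulVec (Aword (wordPrefix (shiftW a m) n))ᵀ
    (fun i : Fin 2 ↦ u (m + i)) i
  rw [Aword_wordPrefix_transpose_mulVec hu] at h
  rw [show (fun i : Fin 2 ↦ t * (u (m + i) : ℚ_[p])) =
    t • (Int.castRingHom ℚ_[p] ∘ fun i : Fin 2 ↦ u (m + i)) from rfl, mulVec_smul]
  exact congrArg (t * ·) h.symm

theorem matQ_transpose_Aword_mulVec_ne_zero (u : List ℕ) {y : Fin 2 → ℚ_[p]} (hy : y ≠ 0) :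
    matQ p (Aword u)ᵀ *ᵥ y ≠ 0 := by
  refine fun h ↦ hy (eq_zero_of_mulVec_eq_zero ?_ h)
  rw [matQ, ← Int.cast_det, det_transpose, det_Aword]
  simp

theorem mul_max_norm_le_of_le_norm {r : ℝ} (hr : 0 ≤ r) (t : ℚ_[p]) {u₀ u₁ A B : ℤ}
    (h : r ≤ ‖((A * u₀ + B * u₁ : ℤ) : ℚ_[p])‖) :
    r * max ‖t * u₀‖ ‖t * u₁‖ ≤ ‖(A : ℚ_[p]) * (t * u₀) + B * (t * u₁)‖ := by
  have hmax : max ‖t * u₀‖ ‖t * u₁‖ ≤ ‖t‖ := by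
    simp only [norm_mul]
    exact max_le (mul_le_of_le_one_right (norm_nonneg t) (Padic.norm_int_le_one u₀))
      (mul_le_of_le_one_right (norm_nonneg t) (Padic.norm_int_le_one u₁))
  calc r * max ‖t * u₀‖ ‖t * u₁‖ ≤ ‖t‖ * r := by rw [mul_comm]; gcongr
    _ ≤ ‖t‖ * ‖((A * u₀ + B * u₁ : ℤ) : ℚ_[p])‖ := by gcongr
    _ = ‖(A : ℚ_[p]) * (t * u₀) + B * (t * u₁)‖ := by rw [← norm_mul]; push_cast; ring_nf

theorem PBadE.of_tendsto {ι : Type*} {l : Filter ι} [l.NeBot] {ε : ℝ} {V : ι → Fin 2 → ℚ_[p]}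
    {v : Fin 2 → ℚ_[p]} (hV : Tendsto V l (𝓝 v)) (hv : v ≠ 0)
    (h : ∀ A B : ℤ, ¬(A = 0 ∧ B = 0) → ∀ᶠ i in l,
      ε / max ((A : ℝ) ^ 2) ((B : ℝ) ^ 2) * max ‖V i 0‖ ‖V i 1‖ ≤
        ‖(A : ℚ_[p]) * V i 0 + (B : ℚ_[p]) * V i 1‖) :
    PBadE p ε v := by
  intro A B hAB
  have hmax : 0 < max ‖v 0‖ ‖v 1‖ := by
    contrapose! hv
    ext i
    fin_cases i
    · exact norm_le_zero_iff.1 ((le_max_left _ _).trans hv)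
    · exact norm_le_zero_iff.1 ((le_max_right _ _).trans hv)
  have hclosed : IsClosed {u : Fin 2 → ℚ_[p] | ε / max ((A : ℝ) ^ 2) ((B : ℝ) ^ 2) *
      max ‖u 0‖ ‖u 1‖ ≤ ‖(A : ℚ_[p]) * u 0 + (B : ℚ_[p]) * u 1‖} :=
    isClosed_le (by fun_prop) (by fun_prop)
  rw [le_div_iff₀ hmax]
  exact hclosed.mem_of_tendsto hV (h A B hAB)

theorem eventually_wordPrefix_eq {ι : Type*} {l : Filter ι} {v : ι → ℕ → ℕ} {w : ℕ → ℕ}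
    (hv : ∀ i, ∀ᶠ k in l, v k i = w i) (n : ℕ) :
    ∀ᶠ k in l, wordPrefix (v k) n = wordPrefix w n :=
  ((Finset.range n).eventually_all.2 fun i _ ↦ hv i).mono fun _ hk ↦
    List.map_congr_left fun i hi ↦ hk i (Finset.mem_range.2 (List.mem_range.1 hi))

theorem stmt_1_general (p : ℕ) [Fact p.Prime]
    (x : ℝ)
    (δ : ℝ) (hδ : 0 < δ)
    (hMad : ∀ q : ℕ, 1 ≤ q →
      δ ≤ (q : ℝ) * ‖((q : ℕ) : ℚ_[p])‖ * distNearestInt ((q : ℝ) * x))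
    (a : ℕ → ℕ) (ha : IsCFSeq x a) (Q : ℕ → ℤ) (hQ : IsCFDen a Q)
    (nk : ℕ → ℕ) (hnk : StrictMono nk)
    (w : ℕ → ℕ) (hw : ∀ i : ℕ, ∃ K : ℕ, ∀ k ≥ K, a (nk k + i) = w i)
    (y : Fin 2 → ℚ_[p]) (hy : max ‖y 0‖ ‖y 1‖ = 1)
    (e : ℕ → ℤ) (c : ℕ → Fin 2 → ℚ_[p])
    (hc : ∀ k : ℕ, c k = fun i : Fin 2 =>
      (p : ℚ_[p]) ^ (e k) * ((Q (nk k + (i : ℕ)) : ℚ_[p])))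
    (hconv : Tendsto c atTop (nhds y)) :
    ∃ ε > 0, LMadE p ε w y := by
  have hMad : MadE p δ x := hMad
  refine ⟨δ / 4, by positivity, fun n ↦ ?_, fun n ↦ ?_⟩
  · obtain ⟨K, hK⟩ := hw n
    rw [← hK K le_rfl]
    refine ⟨ha.one_le _, ?_⟩
    have hle : ((a (nk K + n) : ℤ) : ℝ) ≤ (δ / 4)⁻¹ := by
      rw [inv_div, le_div_iff₀ hδ]
      push_cast
      linarith [hMad.mul_le_one ha hQ (nk K + n)]
    linarith [Int.le_floor.2 hle]
  · have hy0 : y ≠ 0 := by rintro rfl; simp at hy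
    have hlarge : Tendsto (fun k ↦ Q (nk k + n + 1)) atTop atTop :=
      (hQ.tendsto_atTop ha.one_le).comp <| (tendsto_add_atTop_nat (n + 1)).comp hnk.tendsto_atTop
    refine PBadE.of_tendsto (((continuous_const.matrix_mulVec continuous_id).tendsto y).comp hconv)
      (matQ_transpose_Aword_mulVec_ne_zero _ hy0) fun A B hAB ↦ ?_
    filter_upwards [eventually_wordPrefix_eq (fun i ↦ eventually_atTop.2 (hw i)) n,
      hlarge.eventually_gt_atTop |A|] with k hpre hA
    have hk : matQ p (Aword (wordPrefix w n))ᵀ *ᵥ c k =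
        fun i : Fin 2 ↦ (p : ℚ_[p]) ^ e k * (Q (nk k + n + i) : ℚ_[p]) := by
      rw [← hpre, hc k]
      exact matQ_Aword_wordPrefix_transpose_mulVec hQ.2.2 _ _ _
    simp only [Function.comp_apply, id_eq, hk, Fin.val_zero, Fin.val_one, add_zero]
    exact mul_max_norm_le_of_le_norm (by positivity) _
      (hMad.div_max_sq_le_norm ha hQ _ (hQ.comb_ne_zero ha.one_le hAB hA))

/-- limit points of shifted CF-words of a counterexample to PLC, together
with the `p`-adic limits of normalized consecutive convergent denominators, lie in
`LMad_ε` for some `ε > 0`. -/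
theorem stmt_1 (p : ℕ) [Fact p.Prime]
    (x : ℝ) (hxirr : Irrational x) (hx0 : 0 < x) (hx1 : x < 1)
    (δ : ℝ) (hδ : 0 < δ)
    (hMad : ∀ q : ℕ, 1 ≤ q →
      δ ≤ (q : ℝ) * ‖((q : ℕ) : ℚ_[p])‖ * distNearestInt ((q : ℝ) * x))
    (a : ℕ → ℕ) (ha : IsCFSeq x a) (Q : ℕ → ℤ) (hQ : IsCFDen a Q)
    (nk : ℕ → ℕ) (hnk : StrictMono nk)
    (w : ℕ → ℕ) (hw : ∀ i : ℕ, ∃ K : ℕ, ∀ k ≥ K, a (nk k + i) = w i)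
    (y : Fin 2 → ℚ_[p]) (hy : max ‖y 0‖ ‖y 1‖ = 1)
    (e : ℕ → ℤ) (c : ℕ → Fin 2 → ℚ_[p])
    (hc : ∀ k : ℕ, c k = fun i : Fin 2 =>
      (p : ℚ_[p]) ^ (e k) * ((Q (nk k + (i : ℕ)) : ℚ_[p])))
    (hcn : ∀ k : ℕ, max ‖c k 0‖ ‖c k 1‖ = 1)
    (hconv : Tendsto c atTop (nhds y)) :
    ∃ ε > 0, LMadE p ε w y :=
  stmt_1_general p x δ hδ hMad a ha Q hQ nk hnk w hw y hy e c hc hconv
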